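/- Assume char F ≠ 2. Let c = a₁a₂a₃b₁b₂b₃ be a closed path in the double quiver Q*, where a₁,a₂,a₃,b₁,b₂,b₃ are paths such that aᵢ' = bᵢ' for i = 1,2,3. Then tr(c) ≡ 0, i.e., tr(c) is decomposable in SI(Q). -/
import Mathlib


open MvPolynomial Matrix

set_option maxHeartbeats 1000000
set_option synthInstance.maxHeartbeats 400000

section QuiverSemiInvariants

variable {V A : Type}

/-- Arrows of the double quiver `Q*`: `Sum.inl a` is the arrow `a ∈ Q₁`,
`Sum.inr a` is the reversed arrow `a*`. -/
abbrev DArrow (A : Type) : Type := A ⊕ A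

/-- The involution `x ↦ x*` on arrows of the double quiver. -/
def starArrow : DArrow A → DArrow A := Sum.elim Sum.inr Sum.inl

variable (hd tl : A → V)

/-- Head of a double arrow. -/
def dhd : DArrow A → V := Sum.elim hd tl

/-- Tail of a double arrow. -/
def dtl : DArrow A → V := Sum.elim tl hd

/-- The path `a*` associated to a path `a` (a path is written as the list of its arrows,
in the order of the composition `a₁⋯a_s`). -/
def starPath (l : List (DArrow A)) : List (DArrow A) := (l.map starArrow).reverse

/-- The head vertex of a path. -/
def fstV (l : List (DArrow A)) : Option V := l.head?.map (dhd hd tl)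

/-- The tail vertex of a path. -/
def lstV (l : List (DArrow A)) : Option V := l.getLast?.map (dtl hd tl)

/-- `l` is a path in the double quiver: it is nonempty and consecutive arrows compose
(the tail of each arrow is the head of the next one). -/
def IsPathL (l : List (DArrow A)) : Prop :=
  l ≠ [] ∧ l.Chain' fun x y => dtl hd tl x = dhd hd tl y

/-- `l` is a closed path: a path whose head vertex equals its tail vertex. -/
def IsClosedPath (l : List (DArrow A)) : Prop :=
  IsPathL hd tl l ∧ fstV hd tl l = lstV hd tl l

/-- The set of arrows occurring in the path `l`. -/
def ArrL (l : List (DArrow A)) : Set (DArrow A) := {x | x ∈ l}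

/-- The set of vertices of a set of double arrows. -/
def VerS (S : Set (DArrow A)) : Set V := {v | ∃ x ∈ S, dhd hd tl x = v ∨ dtl hd tl x = v}

/-- The set of vertices occurring in the path `l`. -/
def VerL (l : List (DArrow A)) : Set V := VerS hd tl (ArrL l)

/-- A multilinear path: a closed path in which every double arrow occurs at most once. -/
def IsMultilinear (l : List (DArrow A)) : Prop := IsClosedPath hd tl l ∧ l.Nodup

/-- A primitive closed path: a closed path without self-intersections, i.e. the
vertices it passes through are pairwise distinct. -/
def IsPrimitive (l : List (DArrow A)) : Prop :=
  IsClosedPath hd tl l ∧ (l.map (dhd hd tl)).Nodup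

/-- The multidegree of a path. -/
def mdegL [DecidableEq A] (l : List (DArrow A)) : A → ℕ := fun a =>
  l.count (Sum.inl a) + l.count (Sum.inr a)

/-- A tree path: a multilinear path such that whenever both `x` and `x*` occur
(for `x ∈ Q₁`), the remaining arrows split into two nonempty parts with disjoint
vertex sets. -/
def IsTreePath (l : List (DArrow A)) : Prop :=
  IsMultilinear hd tl l ∧
    ∀ x : A, Sum.inl x ∈ l → Sum.inr x ∈ l →
      ∃ G L : Set (DArrow A),
        G ∪ L = ArrL l \ {Sum.inl x, Sum.inr x} ∧ Disjoint G L ∧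
        G.Nonempty ∧ L.Nonempty ∧ Disjoint (VerS hd tl G) (VerS hd tl L)

/-- A simple tree path: a tree path all of whose arrows occurring without their star
are loops. -/
def IsSimpleTreePath (l : List (DArrow A)) : Prop :=
  IsTreePath hd tl l ∧ ∀ x ∈ l, starArrow x ∉ l → dhd hd tl x = dtl hd tl x

/-- A decomposition of a closed path into primitive closed paths: a family of primitive
closed paths with pairwise disjoint arrow sets whose arrow sets together give the set of
arrows of `l`. -/
def IsDecomposition (l : List (DArrow A)) (s : ℕ) (b : Fin s → List (DArrow A)) : Prop :=
  (∀ i, IsPrimitive hd tl (b i)) ∧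
    (∀ i j, i ≠ j → Disjoint (ArrL (b i)) (ArrL (b j))) ∧
    (⋃ i, ArrL (b i)) = ArrL l

/-- The base relation for the equivalence `∼` on closed paths: `a ∼ a*` and `xy ∼ yx`. -/
def PathRel (l m : List (DArrow A)) : Prop :=
  m = starPath l ∨ ∃ u v : List (DArrow A), l = u ++ v ∧ m = v ++ u

/-- The smallest equivalence with `a ∼ a*` and `xy ∼ yx`. -/
def PathEquiv : List (DArrow A) → List (DArrow A) → Prop :=
  Relation.EqvGen PathRel

/-- The number of common vertices of the `i`-th and `j`-th member of a family of paths: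
the mark of the corresponding edge of the diagram which is the type of a decomposition. -/
noncomputable def interCard (s : ℕ) (b : Fin s → List (DArrow A)) (i j : Fin s) : ℕ :=
  (VerL hd tl (b i) ∩ VerL hd tl (b j)).ncard

/-- Three closed paths form a fan: all pairwise vertex intersections are one and the
same single vertex. -/
def FormFan (l₁ l₂ l₃ : List (DArrow A)) : Prop :=
  ∃ u : V,
    VerL hd tl l₁ ∩ VerL hd tl l₂ = {u} ∧
    VerL hd tl l₁ ∩ VerL hd tl l₃ = {u} ∧
    VerL hd tl l₂ ∩ VerL hd tl l₃ = {u}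

/-- Three closed paths form a chain (with `l₂` in the middle): `l₂ ∼ c₁c₂` for paths
`c₁, c₂` such that both endpoints of `c₁` lie in `Ver l₁` and `Ver c₁ ∩ Ver l₃ = ∅`. -/
def FormChain (l₁ l₂ l₃ : List (DArrow A)) : Prop :=
  ∃ c₁ c₂ : List (DArrow A),
    PathEquiv l₂ (c₁ ++ c₂) ∧ IsPathL hd tl c₁ ∧ IsPathL hd tl c₂ ∧
    (∀ v ∈ fstV hd tl c₁, v ∈ VerL hd tl l₁) ∧
    (∀ v ∈ lstV hd tl c₁, v ∈ VerL hd tl l₁) ∧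
    Disjoint (VerL hd tl c₁) (VerL hd tl l₃)

/-- The diagram (type) of the decomposition `b` is admissible: all edge marks are `1`
or `2` and every cycle of the diagram is a triangle all of whose edges are marked `1`. -/
def AdmissibleDiagram (s : ℕ) (b : Fin s → List (DArrow A)) : Prop :=
  (∀ i j : Fin s, i ≠ j → interCard hd tl s b i j ≤ 2) ∧
    ∀ (k : ℕ) (c : ZMod k → Fin s), 3 ≤ k → Function.Injective c →
      (∀ i : ZMod k, 1 ≤ interCard hd tl s b (c i) (c (i + 1))) →
      k = 3 ∧ ∀ i : ZMod k, interCard hd tl s b (c i) (c (i + 1)) = 1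

/-- The closed path `l` is admissible with respect to the decomposition `b`. -/
def AdmissibleWrt (l : List (DArrow A)) (s : ℕ) (b : Fin s → List (DArrow A)) : Prop :=
  IsDecomposition hd tl l s b ∧ AdmissibleDiagram hd tl s b ∧
    (∀ i j k : Fin s, i ≠ j → j ≠ k → i ≠ k →
      1 ≤ interCard hd tl s b i j → 1 ≤ interCard hd tl s b j k →
      1 ≤ interCard hd tl s b i k → FormFan hd tl (b i) (b j) (b k)) ∧
    ∀ i j k : Fin s, i ≠ j → j ≠ k → i ≠ k →
      interCard hd tl s b i j = 2 → interCard hd tl s b j k = 2 →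
      FormChain hd tl (b i) (b j) (b k)

/-- The closed path `l` is admissible: it is admissible with respect to some
decomposition into primitive closed paths. -/
def IsAdmissible (l : List (DArrow A)) : Prop := ∃ s b, AdmissibleWrt hd tl l s b

variable (F : Type) [Field F]

/-- The coordinate ring `F[H]` of the space of representations of dimension `(2,…,2)`. -/
abbrev PolyR (F A : Type) [Field F] : Type := MvPolynomial (A × Fin 2 × Fin 2) F

/-- The generic `2×2` matrix attached to the arrow `a ∈ Q₁`. -/
noncomputable def genMat (a : A) : Matrix (Fin 2) (Fin 2) (PolyR F A) :=
  Matrix.of fun i j => MvPolynomial.X (a, i, j)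

/-- The matrix `J₂` of the standard skew-symmetric bilinear form. -/
def J2 (R : Type) [Ring R] : Matrix (Fin 2) (Fin 2) R := !![0, 1; -1, 0]

/-- The matrix attached to a double arrow: `X_a` for `a ∈ Q₁` and
`X_{a*} = -J₂ X_aᵀ J₂`. -/
noncomputable def XArr : DArrow A → Matrix (Fin 2) (Fin 2) (PolyR F A) :=
  Sum.elim (genMat F) fun a => -(J2 (PolyR F A) * (genMat F a)ᵀ * J2 (PolyR F A))

/-- The matrix `X_b` of a path `b = b₁⋯b_s` in the double quiver. -/
noncomputable def XPath (l : List (DArrow A)) : Matrix (Fin 2) (Fin 2) (PolyR F A) :=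
  (l.map (XArr F)).prod

/-- The action of a family `g` of `2×2`-matrices on the coordinate ring:
`x^a_{ij} ↦ (i,j)`-entry of `g_{a'}⁻¹ X_a g_{a''}`. -/
noncomputable def actHom (g : V → Matrix (Fin 2) (Fin 2) F) :
    PolyR F A →ₐ[F] PolyR F A :=
  MvPolynomial.aeval fun p : A × Fin 2 × Fin 2 =>
    (((g (hd p.1))⁻¹).map (algebraMap F (PolyR F A)) * genMat F p.1 *
        (g (tl p.1)).map (algebraMap F (PolyR F A)))
      p.2.1 p.2.2

/-- The algebra of semi-invariants `SI(Q)`: the elements of `F[H]` fixed by every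
family `g = (g_v)` of matrices of determinant one. -/
noncomputable def SIalg : Subalgebra F (PolyR F A) :=
  ⨅ g : {g : V → Matrix (Fin 2) (Fin 2) F // ∀ v, (g v).det = 1},
    AlgHom.equalizer (actHom hd tl F g.1) (AlgHom.id F (PolyR F A))

/-- The augmentation ideal `SI(Q)⁺` of semi-invariants without constant term
(equivalently, the ideal generated by the homogeneous elements of positive degree). -/
noncomputable def augIdeal : Ideal (SIalg hd tl F) :=
  RingHom.ker (MvPolynomial.constantCoeff.comp (SIalg hd tl F).val.toRingHom)

/-- A semi-invariant is decomposable (`≡ 0`) if it lies in the ideal `(SI(Q)⁺)²`. -/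
def Decomposable (f : PolyR F A) : Prop :=
  f ∈ (SIalg hd tl F).val ''
      ((augIdeal hd tl F * augIdeal hd tl F : Ideal (SIalg hd tl F)) : Set (SIalg hd tl F))

end QuiverSemiInvariants


section AuxProof

open Matrix MvPolynomial

variable {V A : Type} (hd tl : A → V) (F : Type) [Field F]

/-- For `2×2` matrices the adjugate is `tr(M)·1 - M`. -/
lemma adjugate_eq2 {R : Type} [CommRing R] (M : Matrix (Fin 2) (Fin 2) R) :
    adjugate M = M.trace • (1 : Matrix (Fin 2) (Fin 2) R) - M := by
  rw [Matrix.adjugate_fin_two]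
  ext i j
  fin_cases i <;> fin_cases j <;> simp [Matrix.trace_fin_two, Matrix.one_apply]

/-- The fundamental `2×2` trace identity used in the proof. -/
lemma step_identity {R : Type} [CommRing R] (X₁ X₂ X₃ Y₁ Y₂ Y₃ : Matrix (Fin 2) (Fin 2) R) :
    (X₁*X₂*X₃*Y₁*Y₂*Y₃).trace + (X₂*X₃*X₁*Y₂*Y₃*Y₁).trace =
      (X₂*X₃*Y₁).trace * (Y₂*Y₃*X₁).trace
        - (Y₁*adjugate X₁).trace * (adjugate Y₃*adjugate Y₂*X₂*X₃).trace
        + (X₂*X₃*X₁).trace * (Y₂*Y₃*Y₁).trace := by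
  simp only [adjugate_eq2]
  simp only [Matrix.trace_fin_two, Matrix.mul_apply, Fin.sum_univ_two, Matrix.sub_apply,
    Matrix.smul_apply, Matrix.one_apply, smul_eq_mul]
  norm_num
  ring

lemma negJ_eq_adjugate {R : Type} [CommRing R] (M : Matrix (Fin 2) (Fin 2) R) :
    -(J2 R * Mᵀ * J2 R) = adjugate M := by
  rw [Matrix.adjugate_fin_two]
  ext i j
  fin_cases i <;> fin_cases j <;>
    simp [J2, Matrix.mul_apply, Matrix.vecMul, dotProduct, Fin.sum_univ_two]

lemma XArr_inr (a : A) : XArr F (Sum.inr a : DArrow A) = adjugate (genMat F a) :=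
  negJ_eq_adjugate _

/-- Equivariance of a matrix with polynomial entries with respect to a fixed family `g`. -/
def Equiv' (g : V → Matrix (Fin 2) (Fin 2) F) (M : Matrix (Fin 2) (Fin 2) (PolyR F A))
    (u v : V) : Prop :=
  (actHom hd tl F g).mapMatrix M =
    ((g u)⁻¹).map (algebraMap F (PolyR F A)) * M * (g v).map (algebraMap F (PolyR F A))

variable {g : V → Matrix (Fin 2) (Fin 2) F}

lemma isUnit_det' (hg : ∀ v, (g v).det = 1) (v : V) : IsUnit (g v).det := by
  rw [hg]; exact isUnit_one

lemma inv_eq_adjugate_of_det_one {R : Type} [CommRing R] (M : Matrix (Fin 2) (Fin 2) R)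
    (h : M.det = 1) : M⁻¹ = adjugate M := by
  rw [Matrix.inv_def, h, Ring.inverse_one, one_smul]

lemma inv_eq_adj (hg : ∀ v, (g v).det = 1) (v : V) : (g v)⁻¹ = adjugate (g v) :=
  inv_eq_adjugate_of_det_one _ (hg v)

lemma map_adj (M : Matrix (Fin 2) (Fin 2) F) :
    adjugate (M.map (algebraMap F (PolyR F A))) = (adjugate M).map (algebraMap F (PolyR F A)) := by
  have := (algebraMap F (PolyR F A)).map_adjugate M
  simpa [RingHom.mapMatrix_apply] using this.symm

lemma cancel_mi (hg : ∀ v, (g v).det = 1) (v : V) :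
    (g v).map (algebraMap F (PolyR F A)) * ((g v)⁻¹).map (algebraMap F (PolyR F A)) = 1 := by
  rw [← Matrix.map_mul, Matrix.mul_nonsing_inv _ (isUnit_det' F hg v)]
  exact Matrix.map_one _ (map_zero _) (map_one _)

lemma cancel_im (hg : ∀ v, (g v).det = 1) (v : V) :
    ((g v)⁻¹).map (algebraMap F (PolyR F A)) * (g v).map (algebraMap F (PolyR F A)) = 1 := by
  rw [← Matrix.map_mul, Matrix.nonsing_inv_mul _ (isUnit_det' F hg v)]
  exact Matrix.map_one _ (map_zero _) (map_one _)

lemma equiv_mul (hg : ∀ v, (g v).det = 1) {M N : Matrix (Fin 2) (Fin 2) (PolyR F A)}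
    {u v w : V} (hM : Equiv' hd tl F g M u v) (hN : Equiv' hd tl F g N v w) :
    Equiv' hd tl F g (M * N) u w := by
  unfold Equiv' at *
  rw [_root_.map_mul, hM, hN]
  have hcan : (g v).map (algebraMap F (PolyR F A)) *
      (((g v)⁻¹).map (algebraMap F (PolyR F A)) * (N * (g w).map (algebraMap F (PolyR F A))))
      = N * (g w).map (algebraMap F (PolyR F A)) := by
    rw [← Matrix.mul_assoc, cancel_mi F hg v, Matrix.one_mul]
  simp only [Matrix.mul_assoc]
  rw [hcan]

lemma equiv_adj (hg : ∀ v, (g v).det = 1) {M : Matrix (Fin 2) (Fin 2) (PolyR F A)}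
    {u v : V} (hM : Equiv' hd tl F g M u v) :
    Equiv' hd tl F g (adjugate M) v u := by
  unfold Equiv' at *
  have h0 : (actHom hd tl F g).mapMatrix (adjugate M)
      = adjugate ((actHom hd tl F g).mapMatrix M) := (actHom hd tl F g).map_adjugate M
  rw [h0, hM, Matrix.adjugate_mul_distrib, Matrix.adjugate_mul_distrib]
  have h1 : adjugate ((g v).map (algebraMap F (PolyR F A)))
      = ((g v)⁻¹).map (algebraMap F (PolyR F A)) := by
    rw [map_adj F, ← inv_eq_adj F hg v]
  have h2 : adjugate (((g u)⁻¹).map (algebraMap F (PolyR F A)))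
      = (g u).map (algebraMap F (PolyR F A)) := by
    rw [map_adj F]
    have hdet : ((g u)⁻¹).det = 1 := by
      rw [Matrix.det_nonsing_inv, hg u, Ring.inverse_one]
    rw [← inv_eq_adjugate_of_det_one _ hdet,
      Matrix.nonsing_inv_nonsing_inv _ (isUnit_det' F hg u)]
  rw [h1, h2, Matrix.mul_assoc]

lemma equiv_genMat (a : A) :
    Equiv' hd tl F g (genMat F a) (hd a) (tl a) := by
  unfold Equiv'
  ext i j
  simp [AlgHom.mapMatrix_apply, Matrix.map_apply, genMat, actHom]

lemma equiv_XArr (hg : ∀ v, (g v).det = 1) (x : DArrow A) :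
    Equiv' hd tl F g (XArr F x) (dhd hd tl x) (dtl hd tl x) := by
  cases x with
  | inl a => exact equiv_genMat hd tl F a
  | inr a =>
    rw [XArr_inr]
    exact equiv_adj hd tl F hg (equiv_genMat hd tl F a)

lemma equiv_XPath (hg : ∀ v, (g v).det = 1) :
    ∀ (l : List (DArrow A)) {u v : V},
      l.Chain' (fun x y => dtl hd tl x = dhd hd tl y) →
      fstV hd tl l = some u → lstV hd tl l = some v →
      Equiv' hd tl F g (XPath F l) u v
  | [], u, v, _, hu, _ => by simp [fstV] at hu
  | [x], u, v, _, hu, hv => by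
    simp [fstV] at hu
    simp [lstV] at hv
    subst hu; subst hv
    simpa [XPath] using equiv_XArr hd tl F hg x
  | x :: y :: t, u, v, hch, hu, hv => by
    obtain ⟨hxy, hch'⟩ := List.isChain_cons_cons.mp hch
    simp [fstV] at hu
    have hv' : lstV hd tl (y :: t) = some v := by
      simpa [lstV, List.getLast?_cons_cons] using hv
    have ih := equiv_XPath hg (y :: t) (u := dhd hd tl y) hch' (by simp [fstV]) hv'
    have hx := equiv_XArr hd tl F hg x
    have hX : XPath F (x :: y :: t) = XArr F x * XPath F (y :: t) := by
      simp [XPath]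
    subst hu
    rw [hX]
    rw [hxy] at hx
    exact equiv_mul hd tl F hg hx ih

lemma trace_fixed (hg : ∀ v, (g v).det = 1) {M : Matrix (Fin 2) (Fin 2) (PolyR F A)}
    {u : V} (hM : Equiv' hd tl F g M u u) :
    actHom hd tl F g M.trace = M.trace := by
  have ht : actHom hd tl F g M.trace = ((actHom hd tl F g).mapMatrix M).trace := by
    simp [Matrix.trace, Matrix.diag, AlgHom.mapMatrix_apply, Matrix.map_apply, map_sum]
  rw [ht, hM, Matrix.trace_mul_comm, ← Matrix.mul_assoc, cancel_mi F hg u, Matrix.one_mul]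

lemma trace_mem (M : Matrix (Fin 2) (Fin 2) (PolyR F A)) (u : V)
    (h : ∀ g : V → Matrix (Fin 2) (Fin 2) F, (∀ v, (g v).det = 1) → Equiv' hd tl F g M u u) :
    M.trace ∈ SIalg hd tl F := by
  rw [SIalg, Algebra.mem_iInf]
  rintro ⟨g, hg⟩
  rw [AlgHom.mem_equalizer]
  exact trace_fixed hd tl F hg (h g hg)

/-- All entries have zero constant term. -/
def ZCC (M : Matrix (Fin 2) (Fin 2) (PolyR F A)) : Prop :=
  ∀ i j, constantCoeff (M i j) = 0

lemma zcc_mul_right {M : Matrix (Fin 2) (Fin 2) (PolyR F A)} (hM : ZCC F M)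
    (N : Matrix (Fin 2) (Fin 2) (PolyR F A)) : ZCC F (M * N) := by
  intro i j
  rw [Matrix.mul_apply, map_sum]
  apply Finset.sum_eq_zero
  intro k _
  rw [_root_.map_mul, hM i k, zero_mul]

lemma zcc_trace {M : Matrix (Fin 2) (Fin 2) (PolyR F A)} (hM : ZCC F M) :
    constantCoeff M.trace = 0 := by
  rw [Matrix.trace_fin_two, map_add, hM 0 0, hM 1 1, add_zero]

lemma zcc_adj {M : Matrix (Fin 2) (Fin 2) (PolyR F A)} (hM : ZCC F M) :
    ZCC F (adjugate M) := by
  intro i j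
  rw [adjugate_eq2, Matrix.sub_apply, map_sub, Matrix.smul_apply, smul_eq_mul,
    _root_.map_mul, zcc_trace F hM, zero_mul, hM i j, sub_zero]

lemma zcc_genMat (a : A) : ZCC F (genMat F a) := by
  intro i j
  simp [genMat]

lemma zcc_XArr (x : DArrow A) : ZCC F (XArr F x) := by
  cases x with
  | inl a => exact zcc_genMat F a
  | inr a => rw [XArr_inr]; exact zcc_adj F (zcc_genMat F a)

lemma zcc_XPath {l : List (DArrow A)} (hl : l ≠ []) : ZCC F (XPath F l) := by
  cases l with
  | nil => exact absurd rfl hl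
  | cons x t =>
    have : XPath F (x :: t) = XArr F x * XPath F t := by simp [XPath]
    rw [this]
    exact zcc_mul_right F (zcc_XArr F x) _

lemma mem_aug (x : SIalg hd tl F) (h : constantCoeff (x : PolyR F A) = 0) :
    x ∈ augIdeal hd tl F := by
  rw [augIdeal, RingHom.mem_ker]
  exact h

/-- Packaging: an invariant trace with zero constant term gives an element
of the augmentation ideal. -/
lemma mk_aug (M : Matrix (Fin 2) (Fin 2) (PolyR F A)) (u : V)
    (h : ∀ g : V → Matrix (Fin 2) (Fin 2) F, (∀ v, (g v).det = 1) → Equiv' hd tl F g M u u)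
    (hz : ZCC F M) :
    ∃ x : SIalg hd tl F, (x : PolyR F A) = M.trace ∧ x ∈ augIdeal hd tl F := by
  refine ⟨⟨M.trace, trace_mem hd tl F M u h⟩, rfl, mem_aug hd tl F _ ?_⟩
  exact zcc_trace F hz

/- list bookkeeping -/

lemma XPath_append (l m : List (DArrow A)) :
    XPath F (l ++ m) = XPath F l * XPath F m := by
  simp [XPath]

lemma fstV_append {l : List (DArrow A)} (m : List (DArrow A)) (h : l ≠ []) :
    fstV hd tl (l ++ m) = fstV hd tl l := by
  rw [fstV, fstV, List.head?_append_of_ne_nil _ h]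

lemma lstV_append (l : List (DArrow A)) {m : List (DArrow A)} (h : m ≠ []) :
    lstV hd tl (l ++ m) = lstV hd tl m := by
  rw [lstV, lstV, List.getLast?_append_of_ne_nil _ h]

lemma junction {l m : List (DArrow A)}
    (h : (l ++ m).Chain' (fun x y => dtl hd tl x = dhd hd tl y))
    (hl : l ≠ []) (hm : m ≠ []) :
    lstV hd tl l = fstV hd tl m ∧ m.Chain' (fun x y => dtl hd tl x = dhd hd tl y) := by
  obtain ⟨h1, h2, h3⟩ := List.isChain_append.mp h
  refine ⟨?_, h2⟩
  have := h3 (l.getLast hl) (by simp [List.getLast?_eq_getLast_of_ne_nil hl])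
    (m.head hm) (by simp [List.head?_eq_head hm])
  rw [lstV, fstV, List.getLast?_eq_getLast_of_ne_nil hl, List.head?_eq_head hm,
    Option.map_some, Option.map_some, this]

end AuxProof

/-- Lemma 10. For `char F ≠ 2`: if `c = a₁a₂a₃b₁b₂b₃` is a closed
path in `Q*` with `aᵢ' = bᵢ'` for `i = 1,2,3`, then `tr(c)` is decomposable. -/
theorem statement12 (F : Type) [Field F] [Infinite F] (hchar : ringChar F ≠ 2)
    {V A : Type} [Fintype V] [Fintype A] (hd tl : A → V)
    (a₁ a₂ a₃ b₁ b₂ b₃ : List (DArrow A))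
    (ha₁ : IsPathL hd tl a₁) (ha₂ : IsPathL hd tl a₂) (ha₃ : IsPathL hd tl a₃)
    (hb₁ : IsPathL hd tl b₁) (hb₂ : IsPathL hd tl b₂) (hb₃ : IsPathL hd tl b₃)
    (hclosed : IsClosedPath hd tl (a₁ ++ a₂ ++ a₃ ++ b₁ ++ b₂ ++ b₃))
    (h₁ : fstV hd tl a₁ = fstV hd tl b₁)
    (h₂ : fstV hd tl a₂ = fstV hd tl b₂)
    (h₃ : fstV hd tl a₃ = fstV hd tl b₃) :
    Decomposable hd tl F ((XPath F (a₁ ++ a₂ ++ a₃ ++ b₁ ++ b₂ ++ b₃)).trace) := by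
    classical
  have na₁ := ha₁.1; have na₂ := ha₂.1; have na₃ := ha₃.1
  have nb₁ := hb₁.1; have nb₂ := hb₂.1; have nb₃ := hb₃.1
  obtain ⟨⟨-, hcch⟩, hcfl⟩ := hclosed
  simp only [List.append_assoc] at hcch hcfl
  have ne2 : a₂ ++ (a₃ ++ (b₁ ++ (b₂ ++ b₃))) ≠ [] := by
    intro h; exact na₂ (List.append_eq_nil_iff.mp h).1
  have ne3 : a₃ ++ (b₁ ++ (b₂ ++ b₃)) ≠ [] := by
    intro h; exact na₃ (List.append_eq_nil_iff.mp h).1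
  have ne4 : b₁ ++ (b₂ ++ b₃) ≠ [] := by
    intro h; exact nb₁ (List.append_eq_nil_iff.mp h).1
  have ne5 : b₂ ++ b₃ ≠ [] := by
    intro h; exact nb₂ (List.append_eq_nil_iff.mp h).1
  obtain ⟨j1', hc2⟩ := junction hd tl hcch na₁ ne2
  obtain ⟨j2', hc3⟩ := junction hd tl hc2 na₂ ne3
  obtain ⟨j3', hc4⟩ := junction hd tl hc3 na₃ ne4
  obtain ⟨j4', hc5⟩ := junction hd tl hc4 nb₁ ne5
  obtain ⟨j5, hc6⟩ := junction hd tl hc5 nb₂ nb₃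
  have j1 : lstV hd tl a₁ = fstV hd tl a₂ := by rw [j1', fstV_append hd tl _ na₂]
  have j2 : lstV hd tl a₂ = fstV hd tl a₃ := by rw [j2', fstV_append hd tl _ na₃]
  have j3 : lstV hd tl a₃ = fstV hd tl b₁ := by rw [j3', fstV_append hd tl _ nb₁]
  have j4 : lstV hd tl b₁ = fstV hd tl b₂ := by rw [j4', fstV_append hd tl _ nb₂]
  have j6 : fstV hd tl a₁ = lstV hd tl b₃ := by
    rw [fstV_append hd tl _ na₁, lstV_append hd tl _ ne2, lstV_append hd tl _ ne3,
      lstV_append hd tl _ ne4, lstV_append hd tl _ ne5, lstV_append hd tl _ nb₃] at hcfl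
    exact hcfl
  obtain ⟨u₁, hu₁⟩ : ∃ u, fstV hd tl a₁ = some u := by
    rw [fstV, List.head?_eq_head na₁]; exact ⟨_, rfl⟩
  obtain ⟨u₂, hu₂⟩ : ∃ u, fstV hd tl a₂ = some u := by
    rw [fstV, List.head?_eq_head na₂]; exact ⟨_, rfl⟩
  obtain ⟨u₃, hu₃⟩ : ∃ u, fstV hd tl a₃ = some u := by
    rw [fstV, List.head?_eq_head na₃]; exact ⟨_, rfl⟩
  have eb₁ : fstV hd tl b₁ = some u₁ := h₁.symm.trans hu₁
  have eb₂ : fstV hd tl b₂ = some u₂ := h₂.symm.trans hu₂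
  have eb₃ : fstV hd tl b₃ = some u₃ := h₃.symm.trans hu₃
  have la₁ : lstV hd tl a₁ = some u₂ := j1.trans hu₂
  have la₂ : lstV hd tl a₂ = some u₃ := j2.trans hu₃
  have la₃ : lstV hd tl a₃ = some u₁ := j3.trans eb₁
  have lb₁ : lstV hd tl b₁ = some u₂ := j4.trans eb₂
  have lb₂ : lstV hd tl b₂ = some u₃ := j5.trans eb₃
  have lb₃ : lstV hd tl b₃ = some u₁ := j6.symm.trans hu₁
  have HA₁ : ∀ g : V → Matrix (Fin 2) (Fin 2) F, (∀ v, (g v).det = 1) →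
      Equiv' hd tl F g (XPath F a₁) u₁ u₂ :=
    fun g hg => equiv_XPath hd tl F hg a₁ ha₁.2 hu₁ la₁
  have HA₂ : ∀ g : V → Matrix (Fin 2) (Fin 2) F, (∀ v, (g v).det = 1) →
      Equiv' hd tl F g (XPath F a₂) u₂ u₃ :=
    fun g hg => equiv_XPath hd tl F hg a₂ ha₂.2 hu₂ la₂
  have HA₃ : ∀ g : V → Matrix (Fin 2) (Fin 2) F, (∀ v, (g v).det = 1) →
      Equiv' hd tl F g (XPath F a₃) u₃ u₁ :=
    fun g hg => equiv_XPath hd tl F hg a₃ ha₃.2 hu₃ la₃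
  have HB₁ : ∀ g : V → Matrix (Fin 2) (Fin 2) F, (∀ v, (g v).det = 1) →
      Equiv' hd tl F g (XPath F b₁) u₁ u₂ :=
    fun g hg => equiv_XPath hd tl F hg b₁ hb₁.2 eb₁ lb₁
  have HB₂ : ∀ g : V → Matrix (Fin 2) (Fin 2) F, (∀ v, (g v).det = 1) →
      Equiv' hd tl F g (XPath F b₂) u₂ u₃ :=
    fun g hg => equiv_XPath hd tl F hg b₂ hb₂.2 eb₂ lb₂
  have HB₃ : ∀ g : V → Matrix (Fin 2) (Fin 2) F, (∀ v, (g v).det = 1) →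
      Equiv' hd tl F g (XPath F b₃) u₃ u₁ :=
    fun g hg => equiv_XPath hd tl F hg b₃ hb₃.2 eb₃ lb₃
  obtain ⟨T1, vT1, hT1⟩ := mk_aug hd tl F (XPath F a₂ * XPath F a₃ * XPath F b₁) u₂
    (fun g hg => equiv_mul hd tl F hg (equiv_mul hd tl F hg (HA₂ g hg) (HA₃ g hg)) (HB₁ g hg))
    (zcc_mul_right F (zcc_mul_right F (zcc_XPath F na₂) _) _)
  obtain ⟨T2, vT2, hT2⟩ := mk_aug hd tl F (XPath F b₂ * XPath F b₃ * XPath F a₁) u₂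
    (fun g hg => equiv_mul hd tl F hg (equiv_mul hd tl F hg (HB₂ g hg) (HB₃ g hg)) (HA₁ g hg))
    (zcc_mul_right F (zcc_mul_right F (zcc_XPath F nb₂) _) _)
  obtain ⟨T3, vT3, hT3⟩ := mk_aug hd tl F (XPath F b₁ * adjugate (XPath F a₁)) u₁
    (fun g hg => equiv_mul hd tl F hg (HB₁ g hg) (equiv_adj hd tl F hg (HA₁ g hg)))
    (zcc_mul_right F (zcc_XPath F nb₁) _)
  obtain ⟨T4, vT4, hT4⟩ := mk_aug hd tl F
    (adjugate (XPath F b₃) * adjugate (XPath F b₂) * XPath F a₂ * XPath F a₃) u₁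
    (fun g hg => equiv_mul hd tl F hg (equiv_mul hd tl F hg (equiv_mul hd tl F hg
      (equiv_adj hd tl F hg (HB₃ g hg)) (equiv_adj hd tl F hg (HB₂ g hg)))
      (HA₂ g hg)) (HA₃ g hg))
    (zcc_mul_right F (zcc_mul_right F (zcc_mul_right F (zcc_adj F (zcc_XPath F nb₃)) _) _) _)
  obtain ⟨T5, vT5, hT5⟩ := mk_aug hd tl F (XPath F a₂ * XPath F a₃ * XPath F a₁) u₂
    (fun g hg => equiv_mul hd tl F hg (equiv_mul hd tl F hg (HA₂ g hg) (HA₃ g hg)) (HA₁ g hg))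
    (zcc_mul_right F (zcc_mul_right F (zcc_XPath F na₂) _) _)
  obtain ⟨T6, vT6, hT6⟩ := mk_aug hd tl F (XPath F b₂ * XPath F b₃ * XPath F b₁) u₂
    (fun g hg => equiv_mul hd tl F hg (equiv_mul hd tl F hg (HB₂ g hg) (HB₃ g hg)) (HB₁ g hg))
    (zcc_mul_right F (zcc_mul_right F (zcc_XPath F nb₂) _) _)
  obtain ⟨T7, vT7, hT7⟩ := mk_aug hd tl F (XPath F a₃ * XPath F a₁ * XPath F b₂) u₃
    (fun g hg => equiv_mul hd tl F hg (equiv_mul hd tl F hg (HA₃ g hg) (HA₁ g hg)) (HB₂ g hg))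
    (zcc_mul_right F (zcc_mul_right F (zcc_XPath F na₃) _) _)
  obtain ⟨T8, vT8, hT8⟩ := mk_aug hd tl F (XPath F b₃ * XPath F b₁ * XPath F a₂) u₃
    (fun g hg => equiv_mul hd tl F hg (equiv_mul hd tl F hg (HB₃ g hg) (HB₁ g hg)) (HA₂ g hg))
    (zcc_mul_right F (zcc_mul_right F (zcc_XPath F nb₃) _) _)
  obtain ⟨T9, vT9, hT9⟩ := mk_aug hd tl F (XPath F b₂ * adjugate (XPath F a₂)) u₂
    (fun g hg => equiv_mul hd tl F hg (HB₂ g hg) (equiv_adj hd tl F hg (HA₂ g hg)))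
    (zcc_mul_right F (zcc_XPath F nb₂) _)
  obtain ⟨T10, vT10, hT10⟩ := mk_aug hd tl F
    (adjugate (XPath F b₁) * adjugate (XPath F b₃) * XPath F a₃ * XPath F a₁) u₂
    (fun g hg => equiv_mul hd tl F hg (equiv_mul hd tl F hg (equiv_mul hd tl F hg
      (equiv_adj hd tl F hg (HB₁ g hg)) (equiv_adj hd tl F hg (HB₃ g hg)))
      (HA₃ g hg)) (HA₁ g hg))
    (zcc_mul_right F (zcc_mul_right F (zcc_mul_right F (zcc_adj F (zcc_XPath F nb₁)) _) _) _)
  obtain ⟨T11, vT11, hT11⟩ := mk_aug hd tl F (XPath F a₃ * XPath F a₁ * XPath F a₂) u₃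
    (fun g hg => equiv_mul hd tl F hg (equiv_mul hd tl F hg (HA₃ g hg) (HA₁ g hg)) (HA₂ g hg))
    (zcc_mul_right F (zcc_mul_right F (zcc_XPath F na₃) _) _)
  obtain ⟨T12, vT12, hT12⟩ := mk_aug hd tl F (XPath F b₃ * XPath F b₁ * XPath F b₂) u₃
    (fun g hg => equiv_mul hd tl F hg (equiv_mul hd tl F hg (HB₃ g hg) (HB₁ g hg)) (HB₂ g hg))
    (zcc_mul_right F (zcc_mul_right F (zcc_XPath F nb₃) _) _)
  obtain ⟨T13, vT13, hT13⟩ := mk_aug hd tl F (XPath F a₁ * XPath F a₂ * XPath F b₃) u₁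
    (fun g hg => equiv_mul hd tl F hg (equiv_mul hd tl F hg (HA₁ g hg) (HA₂ g hg)) (HB₃ g hg))
    (zcc_mul_right F (zcc_mul_right F (zcc_XPath F na₁) _) _)
  obtain ⟨T14, vT14, hT14⟩ := mk_aug hd tl F (XPath F b₁ * XPath F b₂ * XPath F a₃) u₁
    (fun g hg => equiv_mul hd tl F hg (equiv_mul hd tl F hg (HB₁ g hg) (HB₂ g hg)) (HA₃ g hg))
    (zcc_mul_right F (zcc_mul_right F (zcc_XPath F nb₁) _) _)
  obtain ⟨T15, vT15, hT15⟩ := mk_aug hd tl F (XPath F b₃ * adjugate (XPath F a₃)) u₃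
    (fun g hg => equiv_mul hd tl F hg (HB₃ g hg) (equiv_adj hd tl F hg (HA₃ g hg)))
    (zcc_mul_right F (zcc_XPath F nb₃) _)
  obtain ⟨T16, vT16, hT16⟩ := mk_aug hd tl F
    (adjugate (XPath F b₂) * adjugate (XPath F b₁) * XPath F a₁ * XPath F a₂) u₃
    (fun g hg => equiv_mul hd tl F hg (equiv_mul hd tl F hg (equiv_mul hd tl F hg
      (equiv_adj hd tl F hg (HB₂ g hg)) (equiv_adj hd tl F hg (HB₁ g hg)))
      (HA₁ g hg)) (HA₂ g hg))
    (zcc_mul_right F (zcc_mul_right F (zcc_mul_right F (zcc_adj F (zcc_XPath F nb₂)) _) _) _)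
  obtain ⟨T17, vT17, hT17⟩ := mk_aug hd tl F (XPath F a₁ * XPath F a₂ * XPath F a₃) u₁
    (fun g hg => equiv_mul hd tl F hg (equiv_mul hd tl F hg (HA₁ g hg) (HA₂ g hg)) (HA₃ g hg))
    (zcc_mul_right F (zcc_mul_right F (zcc_XPath F na₁) _) _)
  obtain ⟨T18, vT18, hT18⟩ := mk_aug hd tl F (XPath F b₁ * XPath F b₂ * XPath F b₃) u₁
    (fun g hg => equiv_mul hd tl F hg (equiv_mul hd tl F hg (HB₁ g hg) (HB₂ g hg)) (HB₃ g hg))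
    (zcc_mul_right F (zcc_mul_right F (zcc_XPath F nb₁) _) _)
  have h2ne : (2 : F) ≠ 0 := Ring.two_ne_zero hchar
  refine ⟨algebraMap F (SIalg hd tl F) (2⁻¹ : F) *
      ((T1*T2 - T3*T4 + T5*T6) - (T7*T8 - T9*T10 + T11*T12) + (T13*T14 - T15*T16 + T17*T18)),
      ?_, ?_⟩
  · refine SetLike.mem_coe.mpr (Ideal.mul_mem_left _ _ ?_)
    exact add_mem (sub_mem (add_mem (sub_mem (Ideal.mul_mem_mul hT1 hT2)
      (Ideal.mul_mem_mul hT3 hT4)) (Ideal.mul_mem_mul hT5 hT6))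
      (add_mem (sub_mem (Ideal.mul_mem_mul hT7 hT8) (Ideal.mul_mem_mul hT9 hT10))
        (Ideal.mul_mem_mul hT11 hT12)))
      (add_mem (sub_mem (Ideal.mul_mem_mul hT13 hT14) (Ideal.mul_mem_mul hT15 hT16))
        (Ideal.mul_mem_mul hT17 hT18))
  · have S₀ := step_identity (XPath F a₁) (XPath F a₂) (XPath F a₃)
      (XPath F b₁) (XPath F b₂) (XPath F b₃)
    have S₁ := step_identity (XPath F a₂) (XPath F a₃) (XPath F a₁)
      (XPath F b₂) (XPath F b₃) (XPath F b₁)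
    have S₂ := step_identity (XPath F a₃) (XPath F a₁) (XPath F a₂)
      (XPath F b₃) (XPath F b₁) (XPath F b₂)
    have hXc : XPath F (a₁ ++ a₂ ++ a₃ ++ b₁ ++ b₂ ++ b₃) =
        XPath F a₁ * XPath F a₂ * XPath F a₃ * XPath F b₁ * XPath F b₂ * XPath F b₃ := by
      rw [XPath_append, XPath_append, XPath_append, XPath_append, XPath_append]
    have h2 : algebraMap F (PolyR F A) 2⁻¹ * 2 = 1 := by
      rw [show (2 : PolyR F A) = algebraMap F (PolyR F A) 2 from
        (map_ofNat (algebraMap F (PolyR F A)) 2).symm,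
        ← _root_.map_mul, inv_mul_cancel₀ h2ne, _root_.map_one]
    show ((algebraMap F (SIalg hd tl F) (2⁻¹ : F) *
      ((T1*T2 - T3*T4 + T5*T6) - (T7*T8 - T9*T10 + T11*T12) +
        (T13*T14 - T15*T16 + T17*T18)) : SIalg hd tl F) : PolyR F A) = _
    push_cast
    rw [vT1, vT2, vT3, vT4, vT5, vT6, vT7, vT8, vT9, vT10, vT11, vT12, vT13, vT14,
      vT15, vT16, vT17, vT18, hXc]
    linear_combination (-(algebraMap F (PolyR F A) (2⁻¹ : F))) * (S₀ - S₁ + S₂) +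
      (XPath F a₁ * XPath F a₂ * XPath F a₃ * XPath F b₁ * XPath F b₂ * XPath F b₃).trace * h2
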